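/- arXiv:1410.5993 — 4 statements merged into one kernel-verified Lean document; each statement's English description precedes it below -/
import Mathlib

section
/- For every finite set S and every partial order ≤_S on S, setting k = ⌈log₂(|S|+1)⌉, there exist families (ℱ_s)_{s∈S} and (𝒢_s)_{s∈S} of sets of k-ary Boolean functions such that for all s,t ∈ S: (1) ML⁺(ℱ_s) ≤_expr ML⁺(ℱ_t) if and only if ML⁺(𝒢_s) ≤_poly ML⁺(𝒢_t) if and only if s ≤_S t; (2) all logics ML⁺(𝒢_s) are equally expressive, and if s ≰_S t then ML⁺(𝒢_s) is exponentially more succinct than ML⁺(𝒢_t). -/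
set_option autoImplicit false
attribute [local instance] Classical.propDecidable

/-- A Kripke model with `n` modalities: a nonempty set of worlds, `n` accessibility
relations, and a propositional assignment (variables are indexed by `ℕ`). -/
structure KripkeModel (n : ℕ) : Type 1 where
  W : Type
  nonempty : Nonempty W
  R : Fin n → W → W → Prop
  val : ℕ → Set W

/-- A pointed Kripke model. -/
structure PointedModel (n : ℕ) : Type 1 where
  M : KripkeModel n
  w : M.W

/-- Successor selection functions of arity `n`. -/
def SSF (n : ℕ) : Type 1 :=
  (M : KripkeModel n) → M.W → Set M.W

/-- Formulas of the modal logic `ML⁺(𝒪)` for a set `𝒪` of successor selection functions. -/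
inductive MLFormula {n : ℕ} (Os : Set (SSF n)) : Type 1 where
  | var : ℕ → MLFormula Os
  | neg : MLFormula Os → MLFormula Os
  | or : MLFormula Os → MLFormula Os → MLFormula Os
  | box : Os → MLFormula Os → MLFormula Os

/-- Size of a formula: number of nodes of its syntax tree. -/
def MLFormula.size {n : ℕ} {Os : Set (SSF n)} : MLFormula Os → ℕ
  | .var _ => 1
  | .neg φ => φ.size + 1
  | .or φ ψ => φ.size + ψ.size + 1
  | .box _ φ => φ.size + 1

/-- Satisfaction of an `ML⁺(𝒪)` formula in a pointed model. -/
def Satisfies {n : ℕ} {Os : Set (SSF n)} (M : KripkeModel n) : M.W → MLFormula Os → Prop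
  | w, .var p => w ∈ M.val p
  | w, .neg φ => ¬ Satisfies M w φ
  | w, .or φ ψ => Satisfies M w φ ∨ Satisfies M w ψ
  | w, .box O φ => ∀ w' ∈ O.val M w, Satisfies M w' φ

/-- Two formulas (of possibly different logics) are equivalent if they are satisfied
by exactly the same pointed models. -/
def FEquiv {n : ℕ} {Os₁ Os₂ : Set (SSF n)} (φ : MLFormula Os₁) (ψ : MLFormula Os₂) : Prop :=
  ∀ (M : KripkeModel n) (w : M.W), Satisfies M w φ ↔ Satisfies M w ψ

/-- `ML⁺(𝒪₂)` is at least as expressive as `ML⁺(𝒪₁)`. -/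
def LeExpr {n : ℕ} (Os₁ Os₂ : Set (SSF n)) : Prop :=
  ∀ φ : MLFormula Os₁, ∃ ψ : MLFormula Os₂, FEquiv φ ψ

/-- `ML⁺(𝒪₂)` is at least as succinct as `ML⁺(𝒪₁)`: there is a fixed polynomial `p` such
that every `ML⁺(𝒪₁)`-formula has an equivalent `ML⁺(𝒪₂)`-formula of polynomially bounded size. -/
def LePoly {n : ℕ} (Os₁ Os₂ : Set (SSF n)) : Prop :=
  ∃ p : Polynomial ℕ, ∀ φ : MLFormula Os₁, ∃ ψ : MLFormula Os₂,
    FEquiv φ ψ ∧ ψ.size ≤ p.eval φ.size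

def EquallyExpressive {n : ℕ} (Os₁ Os₂ : Set (SSF n)) : Prop :=
  LeExpr Os₁ Os₂ ∧ LeExpr Os₂ Os₁

/-- `ML⁺(𝒪₁)` is exponentially more succinct than `ML⁺(𝒪₂)`: there is a sequence of
`ML⁺(𝒪₁)`-formulas of linearly bounded size and some `c > 1` such that every equivalent
`ML⁺(𝒪₂)`-formula of the `i`-th formula has size at least `c ^ i`. -/
def ExpMoreSuccinct {n : ℕ} (Os₁ Os₂ : Set (SSF n)) : Prop :=
  ∃ (φ : ℕ → MLFormula Os₁) (a b : ℕ) (c : ℝ), 1 < c ∧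
    (∀ i : ℕ, (φ i).size ≤ a * i + b) ∧
    ∀ (i : ℕ) (ψ : MLFormula Os₂), FEquiv (φ i) ψ → c ^ i ≤ ((ψ.size : ℕ) : ℝ)

/-- The successor selection function given by an `n`-ary Boolean function `f`:
it selects the `f`-successors. -/
noncomputable def OfBool {n : ℕ} (f : (Fin n → Bool) → Bool) : SSF n :=
  fun M w => {w' | f (fun j => decide (M.R j w w')) = true}

/-- The set of successor selection functions given by a set of `n`-ary Boolean functions. -/
def boolSSFs {n : ℕ} (F : Set ((Fin n → Bool) → Bool)) : Set (SSF n) :=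
  OfBool '' F

/-- `sSucc M s w w'` : `w'` is an `s`-successor of `w` in `M`. -/
def sSucc {n : ℕ} (M : KripkeModel n) : List (Fin n) → M.W → M.W → Prop
  | [], w, w' => w' = w
  | a :: s, w, w' => ∃ u, M.R a w u ∧ sSucc M s u w'

/-- The successor selection function given by a language `L`: it selects all
`s`-successors for words `s ∈ L`. -/
def OfLang {n : ℕ} (L : Set (List (Fin n))) : SSF n :=
  fun M w => {w' | ∃ s ∈ L, sSucc M s w w'}

/-- The set of successor selection functions given by a set of languages. -/
def langSSFs {n : ℕ} (Ls : Set (Set (List (Fin n)))) : Set (SSF n) :=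
  OfLang '' Ls

/-- The operators of standard multimodal logic `ML_n`: the singleton one-letter languages. -/
def MLn_ops (n : ℕ) : Set (SSF n) := {O | ∃ j : Fin n, O = OfLang {[j]}}

/-- `nestBoxes s φ` is the formula `□_{s₁}□_{s₂}…□_{s_k} φ`. -/
def nestBoxes {n : ℕ} : List (Fin n) → MLFormula (MLn_ops n) → MLFormula (MLn_ops n)
  | [], φ => φ
  | j :: s, φ => .box ⟨OfLang {[j]}, ⟨j, rfl⟩⟩ (nestBoxes s φ)

/-! ### Alternation languages (alphabet {1,2} represented as `Fin 2`, letter `0` ↦ 1, `1` ↦ 2) -/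

/-- The (0-based) `j`-th letter of the alternating word starting with letter `b`. -/
def altLetter (b : Fin 2) (j : ℕ) : Fin 2 := if j % 2 = 0 then b else b + 1

/-- The alternating word of length `ℓ` starting with letter `b`. -/
def altWord (b : Fin 2) (ℓ : ℕ) : List (Fin 2) := (List.range ℓ).map (altLetter b)

/-- The alternation language `A_ℓ` of length `ℓ`. -/
def altLang (ℓ : ℕ) : Set (List (Fin 2)) := {altWord 0 ℓ, altWord 1 ℓ}

/-- Operators of the logic `ML_A(I)`. -/
def MLA_ops (I : Set ℕ) : Set (SSF 2) := (fun ℓ => OfLang (altLang ℓ)) '' I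

/-- Operators of the logic `ML_A⁺(I)` (alternation operators plus the classical boxes). -/
def MLAp_ops (I : Set ℕ) : Set (SSF 2) :=
  MLA_ops I ∪ {OfLang {[(0 : Fin 2)]}, OfLang {[(1 : Fin 2)]}}

/-- The formula `[A_ℓ]^i p` (where `p` is the fixed propositional variable `0`),
as a formula of `ML_A({ℓ})`. -/
def boxAltIter (ℓ : ℕ) : ℕ → MLFormula (MLA_ops {ℓ})
  | 0 => .var 0
  | i + 1 => .box ⟨OfLang (altLang ℓ), ⟨ℓ, rfl, rfl⟩⟩ (boxAltIter ℓ i)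

/-! ### Formula size games -/

/-- The class `{(M,w') | (M,w) ∈ C, w' ∈ O(M,w)}` used in the box move. -/
def boxImage {n : ℕ} (O : SSF n) (C : Set (PointedModel n)) : Set (PointedModel n) :=
  {q | ∃ m ∈ C, ∃ w' ∈ O m.M m.w, q = ⟨m.M, w'⟩}

/-- Closed game trees of the formula size game `FSG(𝒪)`, with root label `⟨C∘D⟩`.
Each constructor corresponds to a legal Spoiler move; leaves are atomic moves. -/
inductive GameTree {n : ℕ} (Os : Set (SSF n)) :
    Set (PointedModel n) → Set (PointedModel n) → Type 1 where
  | atom (p : ℕ) (C D : Set (PointedModel n))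
      (hC : ∀ q ∈ C, q.w ∈ q.M.val p) (hD : ∀ q ∈ D, q.w ∉ q.M.val p) :
      GameTree Os C D
  | not (C D : Set (PointedModel n)) (t : GameTree Os D C) : GameTree Os C D
  | or (C₁ C₂ D : Set (PointedModel n))
      (t₁ : GameTree Os C₁ D) (t₂ : GameTree Os C₂ D) : GameTree Os (C₁ ∪ C₂) D
  | box (O : SSF n) (hO : O ∈ Os) (C D D₁ : Set (PointedModel n))
      (hD : ∀ q ∈ D, ∃ w' ∈ O q.M q.w, (⟨q.M, w'⟩ : PointedModel n) ∈ D₁)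
      (t : GameTree Os (boxImage O C) D₁) : GameTree Os C D

/-- Number of nodes of a game tree. -/
def gameTreeSize {n : ℕ} {Os : Set (SSF n)} :
    ∀ (C D : Set (PointedModel n)), GameTree Os C D → ℕ
  | _, _, .atom _ _ _ _ _ => 1
  | _, _, .not _ _ t => gameTreeSize _ _ t + 1
  | _, _, .or _ _ _ t₁ t₂ => gameTreeSize _ _ t₁ + gameTreeSize _ _ t₂ + 1
  | _, _, .box _ _ _ _ _ _ t => gameTreeSize _ _ t + 1

/-- `IsSubtree t T bl par` : the root of `t` is a node of `T`; `bl` is the sequence of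
successor selection functions labelling box moves on the path from `T`'s root to this node
(excluding the node's own label), and `par = true` iff the path contains an even number
of `¬`-labels. -/
inductive IsSubtree {n : ℕ} {Os : Set (SSF n)} :
    ∀ {C D A B : Set (PointedModel n)},
      GameTree Os C D → GameTree Os A B → List (SSF n) → Bool → Prop where
  | refl {A B : Set (PointedModel n)} (t : GameTree Os A B) : IsSubtree t t [] true
  | not {C D A B : Set (PointedModel n)} {bl : List (SSF n)} {par : Bool}
      {t : GameTree Os C D} {t' : GameTree Os B A} :
      IsSubtree t t' bl par → IsSubtree t (.not A B t') bl (!par)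
  | orLeft {C D A₁ A₂ B : Set (PointedModel n)} {bl : List (SSF n)} {par : Bool}
      {t : GameTree Os C D} {t₁ : GameTree Os A₁ B} (t₂ : GameTree Os A₂ B) :
      IsSubtree t t₁ bl par → IsSubtree t (.or A₁ A₂ B t₁ t₂) bl par
  | orRight {C D A₁ A₂ B : Set (PointedModel n)} {bl : List (SSF n)} {par : Bool}
      {t : GameTree Os C D} (t₁ : GameTree Os A₁ B) {t₂ : GameTree Os A₂ B} :
      IsSubtree t t₂ bl par → IsSubtree t (.or A₁ A₂ B t₁ t₂) bl par
  | box {C D A B D₁ : Set (PointedModel n)} {bl : List (SSF n)} {par : Bool}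
      {t : GameTree Os C D} (O : SSF n) (hO : O ∈ Os)
      (hD : ∀ q ∈ B, ∃ w' ∈ O q.M q.w, (⟨q.M, w'⟩ : PointedModel n) ∈ D₁)
      {t' : GameTree Os (boxImage O A) D₁} :
      IsSubtree t t' bl par → IsSubtree t (.box O hO A B D₁ hD t') (O :: bl) par

/-! ### The canonical game tree `T^ψ` corresponding to a formula `ψ` -/

/-- Positions (nodes) in the syntax tree of a formula. -/
inductive FPos {n : ℕ} {Os : Set (SSF n)} : MLFormula Os → Type 1 where
  | root (φ : MLFormula Os) : FPos φ
  | negChild {φ : MLFormula Os} : FPos φ → FPos (.neg φ)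
  | orLeft {φ ψ : MLFormula Os} : FPos φ → FPos (.or φ ψ)
  | orRight {φ ψ : MLFormula Os} : FPos ψ → FPos (.or φ ψ)
  | boxChild {O : Os} {φ : MLFormula Os} : FPos φ → FPos (.box O φ)

/-- `nodeData φ v C D` computes, for the node `v` of the closed game tree `T^φ(⟨C∘D⟩)`
obtained by playing the Spoiler strategy corresponding to `φ` on the starting node
`⟨C∘D⟩`, the tuple (left label class, right label class, boxlabels, parity of ¬'s). -/
def nodeData {n : ℕ} {Os : Set (SSF n)} :
    (φ : MLFormula Os) → FPos φ →
      Set (PointedModel n) → Set (PointedModel n) →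
      Set (PointedModel n) × Set (PointedModel n) × List (SSF n) × Bool
  | _, .root _, C, D => (C, D, [], true)
  | .neg φ, .negChild q, C, D =>
      let r := nodeData φ q D C
      (r.1, r.2.1, r.2.2.1, !r.2.2.2)
  | .or φ₁ _, .orLeft q, C, D =>
      nodeData φ₁ q {m ∈ C | Satisfies m.M m.w φ₁} D
  | .or _ φ₂, .orRight q, C, D =>
      nodeData φ₂ q {m ∈ C | Satisfies m.M m.w φ₂} D
  | .box O φ, .boxChild q, C, D =>
      let r := nodeData φ q (boxImage O.val C)
        {m ∈ boxImage O.val D | ¬ Satisfies m.M m.w φ}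
      (r.1, r.2.1, O.val :: r.2.2.1, r.2.2.2)

/-- A position is a leaf of the game tree iff the corresponding subformula is a variable. -/
def isLeafPos {n : ℕ} {Os : Set (SSF n)} : (φ : MLFormula Os) → FPos φ → Prop
  | .var _, .root _ => True
  | .neg _, .root _ => False
  | .or _ _, .root _ => False
  | .box _ _, .root _ => False
  | .neg φ, .negChild q => isLeafPos φ q
  | .or φ _, .orLeft q => isLeafPos φ q
  | .or _ ψ, .orRight q => isLeafPos ψ q
  | .box _ φ, .boxChild q => isLeafPos φ q

/-! ### The models `A*_{ℓ,i}` and `B*_{ℓ,s}` -/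

/-- Extend a string `s ∈ {1,2}^i` to an infinite string (only the first `i` letters matter). -/
def extendStr {i : ℕ} (s : Fin i → Fin 2) : ℕ → Fin 2 :=
  fun d => if h : d < i then s ⟨d, h⟩ else 0

/-- The (0-based) `d`-th letter of the concatenation `a_ℓ^{s 0} a_ℓ^{s 1} …`. -/
def bLetter (ℓ : ℕ) (s : ℕ → Fin 2) (d : ℕ) : Fin 2 :=
  altLetter (s (d / ℓ)) (d % ℓ)

/-- The extended model `B*_{ℓ,s}`: a path of length `i·ℓ` spelling `a^ℓ_s`, a trap world
(`none`) with a 1-loop and a 2-loop where `p` (variable 0) is true, and `j`-edges to the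
trap from every base world lacking a `j`-successor. -/
def Bstar (ℓ i : ℕ) (s : ℕ → Fin 2) : KripkeModel 2 where
  W := Option (Fin (i * ℓ + 1))
  nonempty := ⟨none⟩
  R := fun j x y =>
    match x, y with
    | none, none => True
    | none, some _ => False
    | some d, some d' => (d' : ℕ) = (d : ℕ) + 1 ∧ bLetter ℓ s (d : ℕ) = j
    | some d, none => ¬ (((d : ℕ) < i * ℓ) ∧ bLetter ℓ s (d : ℕ) = j)
  val := fun p => {x | p = 0 ∧ x = none}

/-- The root `w₀^B` of `B*_{ℓ,s}`. -/
def rootB (ℓ i : ℕ) (s : ℕ → Fin 2) : (Bstar ℓ i s).W :=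
  some ⟨0, Nat.succ_pos _⟩

/-- Base worlds of `A*_{ℓ,i}`: a depth `d ≤ i·ℓ` together with the branch (which of the
two alternating words the current segment follows); the branch is normalized to `0` at
the main worlds (depths that are multiples of `ℓ`). -/
def AstarBase (ℓ i : ℕ) : Type :=
  {x : ℕ × Fin 2 // x.1 ≤ i * ℓ ∧ (x.1 % ℓ = 0 → x.2 = 0)}

/-- Edges of the base model `A-base_{ℓ,i}` with label `j`. -/
def AbaseEdge (ℓ : ℕ) (j : Fin 2) (x y : ℕ × Fin 2) : Prop :=
  y.1 = x.1 + 1 ∧ ∃ c : Fin 2, j = altLetter c (x.1 % ℓ) ∧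
    (x.1 % ℓ ≠ 0 → c = x.2) ∧ (y.1 % ℓ ≠ 0 → c = y.2)

/-- The extended model `A*_{ℓ,i}`: between consecutive main worlds there are two disjoint
paths spelling `a_ℓ^1` and `a_ℓ^2`; a trap world (`none`) with a 1-loop and a 2-loop where
`p` is false; `j`-edges to the trap from every base world lacking a `j`-successor.
The variable `p` (variable 0) is true exactly at the final main world `w_i`. -/
def Astar (ℓ i : ℕ) : KripkeModel 2 where
  W := Option (AstarBase ℓ i)
  nonempty := ⟨none⟩
  R := fun j x y =>
    match x, y with
    | none, none => True
    | none, some _ => False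
    | some a, some b => AbaseEdge ℓ j a.val b.val
    | some a, none => ¬ ∃ b : AstarBase ℓ i, AbaseEdge ℓ j a.val b.val
  val := fun p => {x | p = 0 ∧ x = some ⟨(i * ℓ, 0), le_refl _, fun _ => rfl⟩}

/-- The root `w₀^A` of `A*_{ℓ,i}`. -/
def rootA (ℓ i : ℕ) : (Astar ℓ i).W :=
  some ⟨(0, 0), Nat.zero_le _, fun _ => rfl⟩

/-- The class `𝔸_{ℓ,i}`. -/
def classA (ℓ i : ℕ) : Set (PointedModel 2) :=
  {⟨Astar ℓ i, rootA ℓ i⟩}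

/-- The class `𝔹_{ℓ,i}`. -/
def classB (ℓ i : ℕ) : Set (PointedModel 2) :=
  {q | ∃ s : Fin i → Fin 2, q = ⟨Bstar ℓ i (extendStr s), rootB ℓ i (extendStr s)⟩}

/-- A node with label classes `C`, `D` covers the string `s` if one of the classes
contains a pointed model `(B*_{ℓ,s}, w)`. -/
def Covers (ℓ i : ℕ) (C D : Set (PointedModel 2)) (s : Fin i → Fin 2) : Prop :=
  ∃ w : (Bstar ℓ i (extendStr s)).W,
    (⟨Bstar ℓ i (extendStr s), w⟩ : PointedModel 2) ∈ C ∪ D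

/-- The word `a^ℓ_s = a_ℓ^{s₁} a_ℓ^{s₂} … a_ℓ^{s_i}`. -/
def aWord (ℓ : ℕ) {i : ℕ} (s : Fin i → Fin 2) : List (Fin 2) :=
  (List.ofFn fun j => altWord (s j) ℓ).flatten

/-- A language is length-uniform if it is nonempty and all its words have the same length. -/
def LengthUniform (L : Set (List (Fin 2))) : Prop :=
  L.Nonempty ∧ ∃ d : ℕ, ∀ x ∈ L, x.length = d

/-- `‖L‖`: the common word length of a length-uniform language. -/
noncomputable def luLen (L : Set (List (Fin 2))) : ℕ :=
  sInf {d : ℕ | ∃ x ∈ L, x.length = d}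

/-- Concatenation of languages. -/
def langConcat (L₁ L₂ : Set (List (Fin 2))) : Set (List (Fin 2)) :=
  {x | ∃ a ∈ L₁, ∃ b ∈ L₂, x = a ++ b}

/-- `L₁ ∘ L₂ ∘ … ∘ L_m` for a list of languages. -/
def concatList (Ls : List (Set (List (Fin 2)))) : Set (List (Fin 2)) :=
  Ls.foldr langConcat {([] : List (Fin 2))}

/-- `𝒪`-bisimulations. -/
def IsOBisim {n : ℕ} (Os : Set (SSF n)) (M₁ M₂ : KripkeModel n)
    (Z : M₁.W → M₂.W → Prop) : Prop :=
  ∀ w₁ w₂, Z w₁ w₂ →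
    (∀ p : ℕ, w₁ ∈ M₁.val p ↔ w₂ ∈ M₂.val p) ∧
    (∀ O ∈ Os, ∀ w₁' ∈ O M₁ w₁, ∃ w₂' ∈ O M₂ w₂, Z w₁' w₂') ∧
    (∀ O ∈ Os, ∀ w₂' ∈ O M₂ w₂, ∃ w₁' ∈ O M₁ w₁, Z w₁' w₂')


/-!
A Boolean function `f` selects the successors whose edge pattern (the set of relations the edge
lies in) it accepts; all functions used below reject the empty pattern `⊥`. Since
`|S| ≤ 2 ^ k - 1`, we can label every `s ∈ S` by a distinct nonzero pattern `x s`, and let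
`y s` be the next label on a cycle through the nonzero patterns.

Expressiveness: `F s` consists of the boxes `[x u]`, `u ≤ s`. If `s ≰ t`, the formula `[x s] p`
separates a single edge of pattern `x s` from no edge at all, while no box of `F t` sees that edge.

Succinctness: `G s` consists of the boxes of all nonzero patterns, so that each box
`[x u ∪ y u] φ = [x u] φ ∧ [y u] φ` is definable and all `ML⁺(G s)` are equally expressive, and
of the boxes `[x u ∪ y u]`, `u ≤ s`. On paths spelling words over `{x s, y s}`, the formula
`[x s ∪ y s]^i p` detects whether `p` holds at the end, for each of the `2 ^ i` words of length
`i`. If `s ≰ t`, no box of `G t` accepts both `x s` and `y s`, so a formula of `ML⁺(G t)` follows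
a single letter at each box and detects this for at most as many words as it has nodes.
-/

namespace MLFormula

variable {n : ℕ} {Os₁ Os₂ : Set (SSF n)}

def inclusion (h : Os₁ ⊆ Os₂) : MLFormula Os₁ → MLFormula Os₂
  | .var p => .var p
  | .neg φ => .neg (inclusion h φ)
  | .or φ ψ => .or (inclusion h φ) (inclusion h ψ)
  | .box O φ => .box ⟨O, h O.2⟩ (inclusion h φ)

theorem size_inclusion (h : Os₁ ⊆ Os₂) (φ : MLFormula Os₁) : (inclusion h φ).size = φ.size := by
  induction φ <;> simp_all [inclusion, size]

theorem satisfies_inclusion (h : Os₁ ⊆ Os₂) (φ : MLFormula Os₁) (M : KripkeModel n) (w : M.W) :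
    Satisfies M w (inclusion h φ) ↔ Satisfies M w φ := by
  induction φ generalizing w <;> simp_all [inclusion, Satisfies]

theorem size_iterate_box (O : Os₁) (φ : MLFormula Os₁) (i : ℕ) :
    ((box O)^[i] φ).size = i + φ.size := by
  induction i with
  | zero => simp
  | succ i ih => rw [Function.iterate_succ_apply', size, ih]; omega

end MLFormula

theorem LePoly.leExpr {n : ℕ} {Os₁ Os₂ : Set (SSF n)} (h : LePoly Os₁ Os₂) : LeExpr Os₁ Os₂ :=
  let ⟨_, hp⟩ := h
  fun φ => (hp φ).imp fun _ => And.left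

theorem LePoly.of_subset {n : ℕ} {Os₁ Os₂ : Set (SSF n)} (h : Os₁ ⊆ Os₂) : LePoly Os₁ Os₂ :=
  ⟨.X, fun φ => ⟨φ.inclusion h, fun M w => (φ.satisfies_inclusion h M w).symm, by
    rw [φ.size_inclusion h, Polynomial.eval_X]⟩⟩

theorem leExpr_of_forall_eq_union {n : ℕ} {Os₁ Os₂ : Set (SSF n)}
    (h : ∀ O ∈ Os₁, ∃ O₁ ∈ Os₂, ∃ O₂ ∈ Os₂, ∀ (M : KripkeModel n) (w : M.W),
      O M w = O₁ M w ∪ O₂ M w) :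
    LeExpr Os₁ Os₂ := by
  intro φ
  induction φ with
  | var p => exact ⟨.var p, fun M w => Iff.rfl⟩
  | neg φ ih =>
    obtain ⟨ψ, hψ⟩ := ih
    exact ⟨.neg ψ, fun M w => not_congr (hψ M w)⟩
  | or φ χ ih₁ ih₂ =>
    obtain ⟨ψ₁, h₁⟩ := ih₁
    obtain ⟨ψ₂, h₂⟩ := ih₂
    exact ⟨.or ψ₁ ψ₂, fun M w => or_congr (h₁ M w) (h₂ M w)⟩
  | box O φ ih =>
    obtain ⟨ψ, hψ⟩ := ih
    obtain ⟨O₁, h₁, O₂, h₂, hO⟩ := h O O.2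
    refine ⟨.neg (.or (.neg (.box ⟨O₁, h₁⟩ ψ)) (.neg (.box ⟨O₂, h₂⟩ ψ))), fun M w => ?_⟩
    simp only [Satisfies, hO, not_or, not_not, Set.mem_union, or_imp, forall_and, hψ M]

theorem ofBool_or {k : ℕ} (f g : (Fin k → Bool) → Bool) (M : KripkeModel k) (w : M.W) :
    OfBool (fun r => f r || g r) M w = OfBool f M w ∪ OfBool g M w := by
  ext v
  simp [OfBool]

open Polynomial in
theorem Polynomial.eval_le_eval_one_mul_pow (p : ℕ[X]) {n : ℕ} (hn : 1 ≤ n) :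
    p.eval n ≤ p.eval 1 * n ^ p.natDegree := by
  simp only [eval_eq_sum_range, one_pow, mul_one, Finset.sum_mul]
  refine Finset.sum_le_sum fun j hj => Nat.mul_le_mul_left _ (Nat.pow_le_pow_right hn ?_)
  exact Nat.lt_succ_iff.mp (Finset.mem_range.mp hj)

open Polynomial Filter in
theorem Polynomial.exists_eval_succ_lt_two_pow (p : ℕ[X]) : ∃ i : ℕ, p.eval (i + 1) < 2 ^ i := by
  set d := p.natDegree
  set C := p.eval 1 * 2 ^ d
  have hlim := tendsto_pow_const_div_const_pow_of_one_lt d one_lt_two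
  obtain ⟨N, hN⟩ := eventually_atTop.mp
    (hlim.eventually_lt_const (inv_pos.mpr (Nat.cast_add_one_pos C)))
  have hsmall : C * (N + 1) ^ d < 2 ^ (N + 1) := by
    have h := hN (N + 1) N.le_succ
    rw [div_lt_iff₀ (by positivity), inv_mul_eq_div, lt_div_iff₀ (Nat.cast_add_one_pos C)] at h
    have : (C : ℝ) * (N + 1 : ℕ) ^ d ≤ (N + 1 : ℕ) ^ d * (C + 1) := by
      nlinarith [pow_nonneg (Nat.cast_nonneg (α := ℝ) (N + 1)) d]
    exact_mod_cast this.trans_lt h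
  refine ⟨2 * N + 1, ?_⟩
  calc p.eval (2 * N + 1 + 1)
      ≤ p.eval 1 * (2 * (N + 1)) ^ d := p.eval_le_eval_one_mul_pow (by omega)
    _ = C * (N + 1) ^ d := by rw [mul_pow]; ring
    _ < 2 ^ (N + 1) := hsmall
    _ ≤ 2 ^ (2 * N + 1) := Nat.pow_le_pow_right two_pos (by omega)

section ExponentialGap

variable {n : ℕ} {Os₁ Os₂ : Set (SSF n)} {φ : ℕ → MLFormula Os₁}

theorem not_lePoly_of_two_pow_le_size (hφ : ∀ i, (φ i).size = i + 1)
    (hgap : ∀ i (ψ : MLFormula Os₂), FEquiv (φ i) ψ → 2 ^ i ≤ ψ.size) :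
    ¬ LePoly Os₁ Os₂ := by
  rintro ⟨p, hp⟩
  obtain ⟨i, hi⟩ := p.exists_eval_succ_lt_two_pow
  obtain ⟨ψ, hψ, hsize⟩ := hp (φ i)
  rw [hφ] at hsize
  exact (hgap i ψ hψ).not_gt (hsize.trans_lt hi)

theorem expMoreSuccinct_of_two_pow_le_size (hφ : ∀ i, (φ i).size = i + 1)
    (hgap : ∀ i (ψ : MLFormula Os₂), FEquiv (φ i) ψ → 2 ^ i ≤ ψ.size) :
    ExpMoreSuccinct Os₁ Os₂ :=
  ⟨φ, 1, 1, 2, one_lt_two, fun i => (hφ i).trans_le (by omega),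
    fun i ψ hψ => by exact_mod_cast hgap i ψ hψ⟩

end ExponentialGap

def boolOp {k : ℕ} {F : Set ((Fin k → Bool) → Bool)} {f : (Fin k → Bool) → Bool} (hf : f ∈ F) :
    boolSSFs F :=
  ⟨OfBool f, Set.mem_image_of_mem OfBool hf⟩

section WordModel

variable {k : ℕ}

/-- A disjoint union of paths, one for each word over the patterns: each world is the part of
its word still to be read, and `c :: w` has a single edge, of pattern `c`, to `w`. -/
abbrev wordModel (k : ℕ) (b : Bool) : KripkeModel k where
  W := List (Fin k → Bool)
  nonempty := ⟨[]⟩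
  R j u v := ∃ c, u = c :: v ∧ c j = true
  val p := {w | b = true ∧ p = 0 ∧ w = []}

theorem notMem_ofBool {f : (Fin k → Bool) → Bool} (hf : f ⊥ = false) {M : KripkeModel k}
    {u v : M.W} (huv : ∀ j, ¬ M.R j u v) : v ∉ OfBool f M u := by
  have hbot : (fun j => decide (M.R j u v)) = ⊥ := funext fun j => decide_eq_false (huv j)
  simp [OfBool, hbot, hf]

theorem satisfies_var_wordModel {F : Set ((Fin k → Bool) → Bool)} {b : Bool}
    {w : List (Fin k → Bool)} {p : ℕ} :
    Satisfies (Os := boolSSFs F) (wordModel k b) w (.var p) ↔ b = true ∧ p = 0 ∧ w = [] :=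
  Iff.rfl

theorem mem_ofBool_wordModel {f : (Fin k → Bool) → Bool} (hf : f ⊥ = false) {b : Bool}
    {u v : List (Fin k → Bool)} :
    v ∈ OfBool f (wordModel k b) u ↔ ∃ c, f c = true ∧ u = c :: v := by
  by_cases h : ∃ c, u = c :: v
  · obtain ⟨c, rfl⟩ := h
    simp [OfBool]
  · exact iff_of_false (notMem_ofBool hf fun j ⟨c, hc, _⟩ => h ⟨c, hc⟩)
      fun ⟨c, _, hc⟩ => h ⟨c, hc⟩

variable {F : Set ((Fin k → Bool) → Bool)}

theorem satisfies_box_wordModel {f : (Fin k → Bool) → Bool} (hf : f ⊥ = false) {O : boolSSFs F}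
    (hO : OfBool f = O) (b : Bool) (w : List (Fin k → Bool)) (φ : MLFormula (boolSSFs F)) :
    Satisfies (wordModel k b) w (.box O φ) ↔
      ∀ c v, w = c :: v → f c = true → Satisfies (wordModel k b) v φ := by
  simp only [Satisfies, ← hO, mem_ofBool_wordModel hf]
  grind

theorem satisfies_wordModel_iterate_box {f : (Fin k → Bool) → Bool} (hf : f ∈ F)
    (hf0 : f ⊥ = false) (b : Bool) (w : List (Fin k → Bool)) (hw : ∀ c ∈ w, f c = true) :
    Satisfies (wordModel k b) w ((MLFormula.box (boolOp hf))^[w.length] (.var 0)) ↔ b = true := by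
  induction w with
  | nil => simp [satisfies_var_wordModel]
  | cons c w ih =>
    rw [List.length_cons, Function.iterate_succ_apply', satisfies_box_wordModel hf0 rfl,
      ← ih fun c hc => hw c (List.mem_cons_of_mem _ hc)]
    have := hw c List.mem_cons_self
    grind

theorem satisfies_wordModel_singleton_iff_nil {a : Fin k → Bool}
    (hF : ∀ f ∈ F, f ⊥ = false ∧ f a = false) (ψ : MLFormula (boolSSFs F)) :
    Satisfies (wordModel k false) [a] ψ ↔ Satisfies (wordModel k false) [] ψ := by
  induction ψ with
  | var p => simp [satisfies_var_wordModel]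
  | neg φ ih => exact not_congr ih
  | or φ χ ih₁ ih₂ => exact or_congr ih₁ ih₂
  | box O φ _ =>
    obtain ⟨f, hfF, hO⟩ := O.2
    simp only [satisfies_box_wordModel (hF f hfF).1 hO]
    grind [(hF f hfF).2]

theorem not_leExpr_boolSSFs {F₁ F₂ : Set ((Fin k → Bool) → Bool)} {f : (Fin k → Bool) → Bool}
    {a : Fin k → Bool} (hf : f ∈ F₁) (hf0 : f ⊥ = false) (hfa : f a = true)
    (hF₂ : ∀ g ∈ F₂, g ⊥ = false ∧ g a = false) :
    ¬ LeExpr (boolSSFs F₁) (boolSSFs F₂) := by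
  intro hle
  obtain ⟨ψ, hψ⟩ := hle (.box (boolOp hf) (.var 0))
  have h := (hψ (wordModel k false) [a]).trans
    ((satisfies_wordModel_singleton_iff_nil hF₂ ψ).trans (hψ (wordModel k false) []).symm)
  simp [satisfies_box_wordModel (O := boolOp hf) hf0 rfl, hfa, satisfies_var_wordModel] at h

end WordModel

section Succinctness

variable {k : ℕ} {F : Set ((Fin k → Bool) → Bool)} {x y : Fin k → Bool}

/-- The words over `{x, y}` at which `ψ` tells whether `p₀` holds at the end of the word. -/
def distinguishedWords (x y : Fin k → Bool) (ψ : MLFormula (boolSSFs F)) :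
    Set (List (Fin k → Bool)) :=
  {w | (∀ c ∈ w, c = x ∨ c = y) ∧
    ¬ (Satisfies (wordModel k true) w ψ ↔ Satisfies (wordModel k false) w ψ)}

theorem exists_cons_mem_distinguishedWords {f : (Fin k → Bool) → Bool} (hf : f ⊥ = false)
    {O : boolSSFs F} (hO : OfBool f = O) {φ : MLFormula (boolSSFs F)} {w : List (Fin k → Bool)}
    (hw : w ∈ distinguishedWords x y (.box O φ)) :
    ∃ c v, w = c :: v ∧ (c = x ∨ c = y) ∧ f c = true ∧ v ∈ distinguishedWords x y φ := by
  obtain ⟨hxy, hdist⟩ := hw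
  simp only [satisfies_box_wordModel hf hO] at hdist
  cases w with
  | nil => simp at hdist
  | cons c v =>
    refine ⟨c, v, rfl, hxy c List.mem_cons_self, ?_, fun d hd => hxy d (.tail _ hd), ?_⟩ <;>
      grind

/-- A box reads one letter, and since no function of `F` accepts both `x` and `y` it tells
apart no more words than its body; `p₀` tells apart only `[]`. -/
theorem encard_distinguishedWords_le (hF : ∀ f ∈ F, f ⊥ = false ∧ ¬ (f x = true ∧ f y = true))
    (ψ : MLFormula (boolSSFs F)) : (distinguishedWords x y ψ).encard ≤ ψ.size := by
  induction ψ with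
  | var p =>
    refine (Set.encard_le_encard fun w hw => ?_).trans (Set.encard_singleton []).le
    by_contra hne
    exact hw.2 (by simp_all [satisfies_var_wordModel])
  | neg φ ih =>
    refine le_trans (Set.encard_le_encard fun w hw => ?_) (ih.trans (by simp [MLFormula.size]))
    exact ⟨hw.1, fun h => hw.2 (not_congr h)⟩
  | or φ χ ih₁ ih₂ =>
    calc (distinguishedWords x y (.or φ χ)).encard
        ≤ (distinguishedWords x y φ ∪ distinguishedWords x y χ).encard := by
          refine Set.encard_le_encard fun w ⟨hxy, hw⟩ => ?_
          by_contra h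
          exact hw (or_congr (of_not_not fun h₁ => h (.inl ⟨hxy, h₁⟩))
            (of_not_not fun h₂ => h (.inr ⟨hxy, h₂⟩)))
      _ ≤ _ := Set.encard_union_le _ _
      _ ≤ φ.size + χ.size := add_le_add ih₁ ih₂
      _ ≤ _ := by simp [MLFormula.size]
  | box O φ ih =>
    obtain ⟨f, hfF, hO⟩ := O.2
    have hmem (w : List (Fin k → Bool)) (hw : w ∈ distinguishedWords x y (.box O φ)) :=
      exists_cons_mem_distinguishedWords (hF f hfF).1 hO hw
    refine le_trans ?_ (ih.trans (by simp [MLFormula.size]))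
    refine Set.encard_le_encard_of_injOn (f := List.tail) (fun w hw => ?_)
      (fun w hw w' hw' h => ?_)
    · obtain ⟨c, v, rfl, -, -, hv⟩ := hmem w hw
      exact hv
    · obtain ⟨c, v, rfl, hc, hfc, -⟩ := hmem w hw
      obtain ⟨c', v', rfl, hc', hfc', -⟩ := hmem w' hw'
      have := (hF f hfF).2
      grind

/-- `[f]^i p₀` tells apart all `2 ^ i` words of length `i` over `{x, y}`. -/
theorem two_pow_le_size_of_fEquiv {F₁ F₂ : Set ((Fin k → Bool) → Bool)}
    {f : (Fin k → Bool) → Bool} (hf : f ∈ F₁) (hf0 : f ⊥ = false) (hfx : f x = true)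
    (hfy : f y = true) (hxy : x ≠ y)
    (hF₂ : ∀ g ∈ F₂, g ⊥ = false ∧ ¬ (g x = true ∧ g y = true)) (i : ℕ)
    (ψ : MLFormula (boolSSFs F₂)) (hψ : FEquiv ((MLFormula.box (boolOp hf))^[i] (.var 0)) ψ) :
    2 ^ i ≤ ψ.size := by
  let word : (Fin i → Bool) → List (Fin k → Bool) := fun σ => List.ofFn fun j => cond (σ j) x y
  have hcond : Function.Injective fun b : Bool => cond b x y := by
    intro a b
    cases a <;> cases b <;> simp [hxy, hxy.symm]
  have hword : Function.Injective word := fun σ τ h =>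
    funext fun j => hcond (congrFun (List.ofFn_injective h) j)
  have hsub : Set.range word ⊆ distinguishedWords x y ψ := by
    rintro _ ⟨σ, rfl⟩
    have hletters : ∀ c ∈ word σ, c = x ∨ c = y := by
      simp only [word, List.mem_ofFn, forall_exists_index]
      rintro c j rfl
      cases σ j <;> simp only [cond_true, cond_false, true_or, or_true]
    have hsat (b : Bool) := (hψ (wordModel k b) (word σ)).symm.trans
      (List.length_ofFn (f := fun j => cond (σ j) x y) ▸
        satisfies_wordModel_iterate_box hf hf0 b (word σ) fun c hc => by
          rcases hletters c hc with rfl | rfl <;> assumption)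
    exact ⟨hletters, by simp [hsat]⟩
  have hcount := hword.encard_range.trans ((Set.encard_le_encard hsub).trans
    (encard_distinguishedWords_le hF₂ ψ))
  exact_mod_cast (by simpa using hcount : (2 : ℕ∞) ^ i ≤ ψ.size)

end Succinctness

section Families

variable {k : ℕ} {S : Type} [PartialOrder S]

def atomFn (c : Fin k → Bool) : (Fin k → Bool) → Bool := fun r => decide (r = c)

def pairFn (c d : Fin k → Bool) : (Fin k → Bool) → Bool := fun r => atomFn c r || atomFn d r

theorem atomFn_apply {c r : Fin k → Bool} : atomFn c r = true ↔ r = c := decide_eq_true_iff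

theorem atomFn_eq_false {c r : Fin k → Bool} (h : r ≠ c) : atomFn c r = false :=
  decide_eq_false h

theorem pairFn_apply {c d r : Fin k → Bool} : pairFn c d r = true ↔ r = c ∨ r = d := by
  simp [pairFn, atomFn_apply]

theorem pairFn_bot {c d : Fin k → Bool} (hc : c ≠ ⊥) (hd : d ≠ ⊥) : pairFn c d ⊥ = false := by
  simp [pairFn, atomFn_eq_false hc.symm, atomFn_eq_false hd.symm]

def exprFamily (x : S → Fin k → Bool) (s : S) : Set ((Fin k → Bool) → Bool) :=
  (fun u => atomFn (x u)) '' Set.Iic s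

def succFamily (x y : S → Fin k → Bool) (s : S) : Set ((Fin k → Bool) → Bool) :=
  atomFn '' {c | c ≠ ⊥} ∪ (fun u => pairFn (x u) (y u)) '' Set.Iic s

theorem pairFn_mem_succFamily (x y : S → Fin k → Bool) (s : S) :
    pairFn (x s) (y s) ∈ succFamily x y s :=
  .inr ⟨s, le_rfl, rfl⟩

theorem exprFamily_mono (x : S → Fin k → Bool) : Monotone (exprFamily x) :=
  fun _ _ h => Set.image_mono (Set.Iic_subset_Iic.mpr h)

theorem succFamily_mono (x y : S → Fin k → Bool) : Monotone (succFamily x y) :=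
  fun _ _ h => Set.union_subset_union_right _ (Set.image_mono (Set.Iic_subset_Iic.mpr h))

variable {x y : S → Fin k → Bool}

theorem not_leExpr_exprFamily (hx : Function.Injective x) (hx0 : ∀ s, x s ≠ ⊥) {s t : S}
    (hst : ¬ s ≤ t) : ¬ LeExpr (boolSSFs (exprFamily x s)) (boolSSFs (exprFamily x t)) := by
  refine not_leExpr_boolSSFs (f := atomFn (x s)) (a := x s) ⟨s, le_rfl, rfl⟩
    (atomFn_eq_false (hx0 s).symm) (atomFn_apply.mpr rfl) ?_
  rintro _ ⟨u, hu, rfl⟩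
  exact ⟨atomFn_eq_false (hx0 u).symm, atomFn_eq_false (hx.ne fun h => hst (h ▸ hu))⟩

theorem leExpr_succFamily (hx0 : ∀ s, x s ≠ ⊥) (hy0 : ∀ s, y s ≠ ⊥) (s t : S) :
    LeExpr (boolSSFs (succFamily x y s)) (boolSSFs (succFamily x y t)) := by
  have hatom {c : Fin k → Bool} (hc : c ≠ ⊥) : OfBool (atomFn c) ∈ boolSSFs (succFamily x y t) :=
    ⟨atomFn c, .inl ⟨c, hc, rfl⟩, rfl⟩
  refine leExpr_of_forall_eq_union ?_
  rintro _ ⟨_, ⟨c, hc, rfl⟩ | ⟨u, -, rfl⟩, rfl⟩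
  · exact ⟨_, hatom hc, _, hatom hc, fun M w => (Set.union_self _).symm⟩
  · exact ⟨_, hatom (hx0 u), _, hatom (hy0 u), ofBool_or _ _⟩

theorem two_pow_le_size_succFamily (hx0 : ∀ s, x s ≠ ⊥) (hy0 : ∀ s, y s ≠ ⊥)
    (hxy : ∀ s, x s ≠ y s)
    (hsep : ∀ s u, (x s = x u ∨ x s = y u) → (y s = x u ∨ y s = y u) → s = u)
    {s t : S} (hst : ¬ s ≤ t) (i : ℕ) (ψ : MLFormula (boolSSFs (succFamily x y t)))
    (hψ : FEquiv ((MLFormula.box (boolOp (pairFn_mem_succFamily x y s)))^[i] (.var 0)) ψ) :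
    2 ^ i ≤ ψ.size := by
  refine two_pow_le_size_of_fEquiv _ (pairFn_bot (hx0 s) (hy0 s)) (pairFn_apply.mpr (.inl rfl))
    (pairFn_apply.mpr (.inr rfl)) (hxy s) ?_ i ψ hψ
  rintro _ (⟨c, hc, rfl⟩ | ⟨u, hu, rfl⟩)
  · simp only [atomFn_apply]
    exact ⟨atomFn_eq_false hc.symm, fun ⟨h₁, h₂⟩ => hxy s (h₁.trans h₂.symm)⟩
  · simp only [pairFn_apply]
    exact ⟨pairFn_bot (hx0 u) (hy0 u), fun ⟨h₁, h₂⟩ => hst (hsep s u h₁ h₂ ▸ hu)⟩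

theorem exists_families_of_separated_patterns (hx : Function.Injective x) (hx0 : ∀ s, x s ≠ ⊥)
    (hy0 : ∀ s, y s ≠ ⊥) (hxy : ∀ s, x s ≠ y s)
    (hsep : ∀ s u, (x s = x u ∨ x s = y u) → (y s = x u ∨ y s = y u) → s = u) :
    ∃ F G : S → Set ((Fin k → Bool) → Bool),
      (∀ s t : S,
        (LeExpr (boolSSFs (F s)) (boolSSFs (F t)) ↔ s ≤ t) ∧
        (LePoly (boolSSFs (G s)) (boolSSFs (G t)) ↔ s ≤ t)) ∧
      (∀ s t : S, EquallyExpressive (boolSSFs (G s)) (boolSSFs (G t))) ∧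
      (∀ s t : S, ¬ s ≤ t → ExpMoreSuccinct (boolSSFs (G s)) (boolSSFs (G t))) := by
  have hsize (s : S) (i : ℕ) :=
    MLFormula.size_iterate_box (boolOp (pairFn_mem_succFamily x y s)) (.var 0) i
  refine ⟨exprFamily x, succFamily x y, fun s t => ⟨⟨?_, ?_⟩, ⟨?_, ?_⟩⟩,
    fun s t => ⟨leExpr_succFamily hx0 hy0 s t, leExpr_succFamily hx0 hy0 t s⟩,
    fun s t hst => expMoreSuccinct_of_two_pow_le_size (hsize s)
      (two_pow_le_size_succFamily hx0 hy0 hxy hsep hst)⟩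
  · exact not_imp_not.mp (not_leExpr_exprFamily hx hx0)
  · exact fun hst => (LePoly.of_subset (Set.image_mono (exprFamily_mono x hst))).leExpr
  · exact not_imp_not.mp fun hst => not_lePoly_of_two_pow_le_size (hsize s)
      (two_pow_le_size_succFamily hx0 hy0 hxy hsep hst)
  · exact fun hst => LePoly.of_subset (Set.image_mono (succFamily_mono x y hst))

end Families

/-- `x` embeds `S` into a cycle of length at least `3` and `y s` follows `x s` on it, so the pair
`(x s, y s)` is determined by its set of elements. -/
theorem exists_separated_pairs {S α : Type} [Fintype S] [Fintype α]
    (hcard : Fintype.card S ≤ Fintype.card α) (h3 : 3 ≤ Fintype.card α) :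
    ∃ x y : S → α, Function.Injective x ∧ (∀ s, x s ≠ y s) ∧
      ∀ s u, (x s = x u ∨ x s = y u) → (y s = x u ∨ y s = y u) → s = u := by
  obtain ⟨m, hm⟩ := Nat.exists_eq_add_of_le' h3
  have hm' : Fintype.card α = Fintype.card (Fin (m + 3)) := hm.trans (Fintype.card_fin _).symm
  obtain ⟨ι⟩ := Function.Embedding.nonempty_of_card_le (hcard.trans_eq hm')
  let e : α ≃ Fin (m + 3) := Fintype.equivOfCardEq hm'
  refine ⟨fun s => e.symm (ι s), fun s => e.symm (ι s + 1), e.symm.injective.comp ι.injective,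
    fun s => by simp, fun s u => ?_⟩
  simp only [e.symm.injective.eq_iff, ι.injective.eq_iff]
  have h₁ (a : Fin (m + 3)) : a + 1 ≠ a := by simp
  have h₂ (a : Fin (m + 3)) : a + 1 + 1 ≠ a := by
    simp [add_assoc, Fin.ext_iff, Fin.val_add, Nat.mod_eq_of_lt]
  grind

/-- the succinctness- and expressiveness relationships between modal logics
defined by sets of `k`-ary Boolean functions (`k = ⌈log₂(|S|+1)⌉`) can be as complex as any
finite partial order. -/
theorem statement0 (S : Type) [Fintype S] [PartialOrder S] :
    ∃ F G : S → Set ((Fin (Nat.clog 2 (Fintype.card S + 1)) → Bool) → Bool),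
      (∀ s t : S,
        (LeExpr (boolSSFs (F s)) (boolSSFs (F t)) ↔ s ≤ t) ∧
        (LePoly (boolSSFs (G s)) (boolSSFs (G t)) ↔ s ≤ t)) ∧
      (∀ s t : S, EquallyExpressive (boolSSFs (G s)) (boolSSFs (G t))) ∧
      (∀ s t : S, ¬ s ≤ t → ExpMoreSuccinct (boolSSFs (G s)) (boolSSFs (G t))) := by
  set k := Nat.clog 2 (Fintype.card S + 1)
  rcases le_or_gt (Fintype.card S) 1 with hS | hS
  · have hle (s t : S) : s ≤ t := (Fintype.card_le_one_iff.mp hS s t).le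
    have hrefl : LePoly (boolSSFs (∅ : Set ((Fin k → Bool) → Bool))) (boolSSFs ∅) :=
      LePoly.of_subset le_rfl
    exact ⟨fun _ => ∅, fun _ => ∅, fun s t => ⟨iff_of_true hrefl.leExpr (hle s t),
      iff_of_true hrefl (hle s t)⟩, fun _ _ => ⟨hrefl.leExpr, hrefl.leExpr⟩,
      fun s t hst => (hst (hle s t)).elim⟩
  · have hpatterns : Fintype.card {c : Fin k → Bool // c ≠ ⊥} + 1 = 2 ^ k := by
      simp [Fintype.card_subtype_compl, Nat.sub_add_cancel Nat.one_le_two_pow]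
    have hk : Fintype.card S + 1 ≤ 2 ^ k := Nat.le_pow_clog one_lt_two _
    have hk4 : 2 ^ 2 ≤ 2 ^ k := Nat.pow_le_pow_right two_pos <|
      (Nat.pow_lt_pow_iff_right one_lt_two).mp (by omega : 2 ^ 1 < 2 ^ k)
    obtain ⟨x, y, hx, hxy, hsep⟩ := exists_separated_pairs (S := S)
      (α := {c : Fin k → Bool // c ≠ ⊥}) (by omega) (by omega)
    refine exists_families_of_separated_patterns (x := fun s => x s) (y := fun s => y s)
      (Subtype.val_injective.comp hx) (fun s => (x s).2) (fun s => (y s).2)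
      (fun s => Subtype.val_injective.ne (hxy s)) fun s u => ?_
    simpa only [Subtype.val_injective.eq_iff] using hsep s u
end

section
/- For every set 𝒪 of successor selection functions, every k ∈ ℕ, and all classes 𝔸, 𝔹 of pointed models: Spoiler wins the formula size game FSG(𝒪) starting with ⟨𝔸∘𝔹⟩ in k moves if and only if there is a formula φ ∈ ML⁺(𝒪) with |φ| = k such that 𝔸 ⊨ φ and 𝔹 ⊨ ¬φ. -/
set_option autoImplicit false
attribute [local instance] Classical.propDecidable

/-!
A closed game tree is the syntax tree of a formula in which every node also records the pair
of classes that its subformula separates, so reading off the move labels gives a formula of the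
same size. Conversely, a separating formula tells Spoiler how to play: at `φ₁ ∨ φ₂` split the
left class according to which disjunct holds, and at `[O]φ` pick for every right-hand model an
`O`-successor falsifying `φ`.
-/

section

variable {n : ℕ} {Os : Set (SSF n)}

def Separates (φ : MLFormula Os) (C D : Set (PointedModel n)) : Prop :=
  (∀ q ∈ C, Satisfies q.M q.w φ) ∧ ∀ q ∈ D, ¬ Satisfies q.M q.w φ

def GameTree.formula : ∀ {C D : Set (PointedModel n)}, GameTree Os C D → MLFormula Os
  | _, _, .atom p _ _ _ _ => .var p
  | _, _, .not _ _ t => .neg t.formula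
  | _, _, .or _ _ _ t₁ t₂ => .or t₁.formula t₂.formula
  | _, _, .box O hO _ _ _ _ t => .box ⟨O, hO⟩ t.formula

theorem GameTree.size_formula {C D : Set (PointedModel n)} (T : GameTree Os C D) :
    T.formula.size = gameTreeSize C D T := by
  induction T <;> simp_all [GameTree.formula, MLFormula.size, gameTreeSize]

theorem GameTree.separates_formula {C D : Set (PointedModel n)} (T : GameTree Os C D) :
    Separates T.formula C D := by
  induction T with
  | atom p C D hC hD => exact ⟨hC, hD⟩
  | not C D t ih => exact ⟨ih.2, fun q hq h => h (ih.1 q hq)⟩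
  | or C₁ C₂ D t₁ t₂ ih₁ ih₂ =>
    refine ⟨?_, fun q hq h => h.elim (ih₁.2 q hq) (ih₂.2 q hq)⟩
    rintro q (hq | hq)
    · exact Or.inl (ih₁.1 q hq)
    · exact Or.inr (ih₂.1 q hq)
  | box O hO C D D₁ hD t ih =>
    refine ⟨fun q hq w' hw' => ih.1 ⟨q.M, w'⟩ ⟨q, hq, w', hw', rfl⟩, fun q hq h => ?_⟩
    obtain ⟨w', hw', hD₁⟩ := hD q hq
    exact ih.2 _ hD₁ (h w' hw')

theorem MLFormula.exists_gameTree_of_separates (φ : MLFormula Os) :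
    ∀ {A B : Set (PointedModel n)}, Separates φ A B →
      ∃ T : GameTree Os A B, gameTreeSize A B T = φ.size := by
  induction φ with
  | var p => exact fun h => ⟨.atom p _ _ h.1 h.2, rfl⟩
  | neg φ ih =>
    intro A B h
    obtain ⟨T, hT⟩ := ih ⟨fun q hq => not_not.mp (h.2 q hq), h.1⟩
    exact ⟨.not A B T, by simp [gameTreeSize, hT, MLFormula.size]⟩
  | or φ₁ φ₂ ih₁ ih₂ =>
    intro A B h
    set A₁ : Set (PointedModel n) := {q ∈ A | Satisfies q.M q.w φ₁}
    set A₂ : Set (PointedModel n) := {q ∈ A | Satisfies q.M q.w φ₂}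
    have hA : A₁ ∪ A₂ = A := by
      ext q
      simp only [A₁, A₂, Set.mem_union, Set.mem_ofPred_eq, ← and_or_left]
      exact and_iff_left_of_imp (h.1 q)
    obtain ⟨T₁, hT₁⟩ := ih₁ (A := A₁) ⟨fun q hq => hq.2, fun q hq h₁ => h.2 q hq (.inl h₁)⟩
    obtain ⟨T₂, hT₂⟩ := ih₂ (A := A₂) ⟨fun q hq => hq.2, fun q hq h₂ => h.2 q hq (.inr h₂)⟩
    rw [← hA]
    exact ⟨.or A₁ A₂ B T₁ T₂, by simp [gameTreeSize, hT₁, hT₂, MLFormula.size]⟩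
  | box O φ ih =>
    intro A B h
    set B₁ : Set (PointedModel n) := {q ∈ boxImage O.val B | ¬ Satisfies q.M q.w φ}
    have hB₁ : ∀ q ∈ B, ∃ w' ∈ O.val q.M q.w, (⟨q.M, w'⟩ : PointedModel n) ∈ B₁ := by
      intro q hq
      obtain ⟨w', hw', hφ⟩ : ∃ w' ∈ O.val q.M q.w, ¬ Satisfies q.M w' φ := by
        simpa [Satisfies] using h.2 q hq
      exact ⟨w', hw', ⟨q, hq, w', hw', rfl⟩, hφ⟩
    obtain ⟨T, hT⟩ := ih (A := boxImage O.val A) (B := B₁)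
      ⟨by rintro _ ⟨q, hq, w', hw', rfl⟩; exact h.1 q hq w' hw', fun q hq => hq.2⟩
    exact ⟨.box O.val O.property A B B₁ hB₁ T, by simp [gameTreeSize, hT, MLFormula.size]⟩

end

/-- formula size game theorem: Spoiler wins the FSG(𝒪) starting with
`⟨𝔸∘𝔹⟩` in `k` moves (i.e. there is a closed game tree with root `⟨𝔸∘𝔹⟩` and exactly `k`
nodes) iff there is an `ML⁺(𝒪)`-formula `φ` with `|φ| = k`, `𝔸 ⊨ φ` and `𝔹 ⊨ ¬φ`. -/
theorem statement2 {n : ℕ} (Os : Set (SSF n)) (k : ℕ) (A B : Set (PointedModel n)) :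
    (∃ T : GameTree Os A B, gameTreeSize A B T = k) ↔
      ∃ φ : MLFormula Os, φ.size = k ∧
        (∀ q ∈ A, Satisfies q.M q.w φ) ∧ (∀ q ∈ B, ¬ Satisfies q.M q.w φ) := by
  constructor
  · rintro ⟨T, rfl⟩
    exact ⟨T.formula, T.size_formula, T.separates_formula⟩
  · rintro ⟨φ, rfl, hA, hB⟩
    exact φ.exists_gameTree_of_separates ⟨hA, hB⟩
end

section
/- Let ℱ and 𝒢 be sets of n-ary Boolean functions. Then ML⁺(𝒢) ≤_expr ML⁺(ℱ) if and only if for each g ∈ 𝒢 there is a set S ⊆ ℱ such that g is logically equivalent to the disjunction ⋁_{f∈S} f. -/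
set_option autoImplicit false
attribute [local instance] Classical.propDecidable

/-! If every `g ∈ 𝒢` is a disjunction `⋁ S` with `S ⊆ ℱ` finite, then `[O_g]φ` is equivalent to
`⋀_{f ∈ S} [O_f]φ`, since the `g`-successors are exactly the union of the `f`-successors.
Conversely, if some `g`-pattern `x₀` is not covered by any `f ∈ ℱ` with `f ≤ g`, take a root
whose successors realise exactly the patterns `y` with `g y = false`, and a second root that
additionally realises `x₀`. Every `f ∈ ℱ` realising `x₀` also realises some `y` with `g y = false`,
so the two roots are `ℱ`-bisimilar, yet `[O_g]p` (with `p` true only at the roots) separates them. -/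

namespace MLFormula

variable {n : ℕ} {Os : Set (SSF n)}

def top : MLFormula Os := .or (.var 0) (.neg (.var 0))

def and (φ ψ : MLFormula Os) : MLFormula Os := .neg (.or (.neg φ) (.neg ψ))

@[simp]
lemma satisfies_top (M : KripkeModel n) (w : M.W) : Satisfies M w (top : MLFormula Os) :=
  em _

@[simp]
lemma satisfies_and (M : KripkeModel n) (w : M.W) (φ ψ : MLFormula Os) :
    Satisfies M w (φ.and ψ) ↔ Satisfies M w φ ∧ Satisfies M w ψ := by
  simp only [and, Satisfies, not_or, not_not]

lemma exists_satisfies_iff_forall_mem (l : List (MLFormula Os)) :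
    ∃ ψ : MLFormula Os, ∀ M w, Satisfies M w ψ ↔ ∀ φ ∈ l, Satisfies M w φ := by
  induction l with
  | nil => exact ⟨top, by simp⟩
  | cons φ l ih =>
    obtain ⟨ψ, hψ⟩ := ih
    exact ⟨φ.and ψ, by simp [hψ]⟩

lemma exists_satisfies_iff_forall_of_finite {s : Set (MLFormula Os)} (hs : s.Finite) :
    ∃ ψ : MLFormula Os, ∀ M w, Satisfies M w ψ ↔ ∀ φ ∈ s, Satisfies M w φ := by
  obtain ⟨ψ, hψ⟩ := exists_satisfies_iff_forall_mem hs.toFinset.toList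
  exact ⟨ψ, fun M w => by simpa using hψ M w⟩

end MLFormula

section Expressivity

variable {n : ℕ}

lemma leExpr_of_forall_box {Os₁ Os₂ : Set (SSF n)}
    (h : ∀ O ∈ Os₁, ∀ ψ : MLFormula Os₂, ∃ θ : MLFormula Os₂,
      ∀ M w, Satisfies M w θ ↔ ∀ w' ∈ O M w, Satisfies M w' ψ) :
    LeExpr Os₁ Os₂ := by
  intro φ
  induction φ with
  | var p => exact ⟨.var p, fun _ _ => Iff.rfl⟩
  | neg φ ih =>
    obtain ⟨ψ, hψ⟩ := ih
    exact ⟨.neg ψ, fun M w => not_congr (hψ M w)⟩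
  | or φ₁ φ₂ ih₁ ih₂ =>
    obtain ⟨ψ₁, hψ₁⟩ := ih₁
    obtain ⟨ψ₂, hψ₂⟩ := ih₂
    exact ⟨.or ψ₁ ψ₂, fun M w => or_congr (hψ₁ M w) (hψ₂ M w)⟩
  | box O φ ih =>
    obtain ⟨ψ, hψ⟩ := ih
    obtain ⟨θ, hθ⟩ := h O O.2 ψ
    exact ⟨θ, fun M w => by
      simp only [Satisfies, hθ]
      exact forall₂_congr fun w' _ => hψ M w'⟩

lemma IsOBisim.satisfies_iff {Os : Set (SSF n)} {M₁ M₂ : KripkeModel n}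
    {Z : M₁.W → M₂.W → Prop} (hZ : IsOBisim Os M₁ M₂ Z) (φ : MLFormula Os) :
    ∀ {w₁ w₂}, Z w₁ w₂ → (Satisfies M₁ w₁ φ ↔ Satisfies M₂ w₂ φ) := by
  induction φ with
  | var p => exact fun h => (hZ _ _ h).1 p
  | neg φ ih => exact fun h => not_congr (ih h)
  | or φ ψ ihφ ihψ => exact fun h => or_congr (ihφ h) (ihψ h)
  | box O φ ih =>
    intro w₁ w₂ h
    obtain ⟨-, hforth, hback⟩ := hZ w₁ w₂ h
    refine ⟨fun hs w₂' hw₂' => ?_, fun hs w₁' hw₁' => ?_⟩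
    · obtain ⟨w₁', hw₁', h'⟩ := hback O O.2 w₂' hw₂'
      exact (ih h').1 (hs w₁' hw₁')
    · obtain ⟨w₂', hw₂', h'⟩ := hforth O O.2 w₁' hw₁'
      exact (ih h').2 (hs w₂' hw₂')

lemma mem_ofBool {M : KripkeModel n} {f : (Fin n → Bool) → Bool} {w w' : M.W} :
    w' ∈ OfBool f M w ↔ f (fun j => decide (M.R j w w')) = true := Iff.rfl

lemma ofBool_eq_biUnion {f : (Fin n → Bool) → Bool} {S : Set ((Fin n → Bool) → Bool)}
    (hf : ∀ x, f x = true ↔ ∃ g ∈ S, g x = true) (M : KripkeModel n) (w : M.W) :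
    OfBool f M w = ⋃ g ∈ S, OfBool g M w := by
  ext w'
  simp only [mem_ofBool, hf, Set.mem_iUnion, exists_prop]

lemma leExpr_boolSSFs_of_forall_exists_disjunction {F G : Set ((Fin n → Bool) → Bool)}
    (h : ∀ g ∈ G, ∃ S ⊆ F, ∀ x, g x = true ↔ ∃ f ∈ S, f x = true) :
    LeExpr (boolSSFs G) (boolSSFs F) := by
  refine leExpr_of_forall_box ?_
  rintro _ ⟨g, hg, rfl⟩ ψ
  obtain ⟨S, hSF, hS⟩ := h g hg
  let boxes : S → MLFormula (boolSSFs F) := fun f => .box ⟨OfBool f, f, hSF f.2, rfl⟩ ψ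
  obtain ⟨θ, hθ⟩ := MLFormula.exists_satisfies_iff_forall_of_finite (Set.finite_range boxes)
  refine ⟨θ, fun M w => ?_⟩
  simp only [hθ, Set.forall_mem_range, boxes, Satisfies, ofBool_eq_biUnion hS,
    Set.mem_iUnion, exists_prop, Subtype.forall]
  exact ⟨fun h w' ⟨f, hf, hw'⟩ => h f hf w' hw', fun h f hf w' hw' => h w' ⟨f, hf, hw'⟩⟩

end Expressivity

section PatternModel

variable {n : ℕ}

def patternModel (U : Set (Fin n → Bool)) : KripkeModel n where
  W := Option U
  nonempty := ⟨none⟩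
  R := fun i x y =>
    match x, y with
    | none, none => False
    | none, some v => v.val i = true
    | some _, _ => True
  val := fun _ => {none}

variable {U V : Set (Fin n → Bool)} {f : (Fin n → Bool) → Bool}

lemma none_mem_ofBool_patternModel_none :
    (none : (patternModel U).W) ∈ OfBool f (patternModel U) none ↔ f (fun _ => false) = true := by
  change f _ = true ↔ _
  congr! 2
  funext j
  exact decide_eq_false id

lemma some_mem_ofBool_patternModel_none {y : U} :
    (some y : (patternModel U).W) ∈ OfBool f (patternModel U) none ↔ f y = true := by
  change f _ = true ↔ _
  congr! 2
  funext j
  exact Bool.eq_iff_iff.2 decide_eq_true_iff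

lemma mem_ofBool_patternModel_some {u : U} {w : (patternModel U).W} :
    w ∈ OfBool f (patternModel U) (some u : (patternModel U).W) ↔ f (fun _ => true) = true := by
  change f _ = true ↔ _
  congr! 2
  funext j
  exact decide_eq_true trivial

lemma exists_mem_ofBool_patternModel (hUV : (∃ y ∈ U, f y = true) → ∃ y ∈ V, f y = true)
    {w₁ w₁' : (patternModel U).W} {w₂ : (patternModel V).W} (hw : w₁.isSome = w₂.isSome)
    (hw₁' : w₁' ∈ OfBool f (patternModel U) w₁) :
    ∃ w₂' ∈ OfBool f (patternModel V) w₂, w₁'.isSome = w₂'.isSome := by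
  match w₁, w₂, w₁' with
  | none, none, none => exact ⟨none, none_mem_ofBool_patternModel_none.2
      (none_mem_ofBool_patternModel_none.1 hw₁'), rfl⟩
  | none, none, some y =>
    obtain ⟨z, hz, hfz⟩ := hUV ⟨y, y.2, some_mem_ofBool_patternModel_none.1 hw₁'⟩
    exact ⟨some ⟨z, hz⟩, some_mem_ofBool_patternModel_none.2 hfz, rfl⟩
  | some _, some b, w₁' =>
    have hf := mem_ofBool_patternModel_some.1 hw₁'
    cases w₁' with
    | none => exact ⟨none, mem_ofBool_patternModel_some.2 hf, rfl⟩
    | some _ => exact ⟨some b, mem_ofBool_patternModel_some.2 hf, rfl⟩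

lemma isOBisim_patternModel {F : Set ((Fin n → Bool) → Bool)}
    (hUV : ∀ f ∈ F, (∃ y ∈ U, f y = true) ↔ ∃ y ∈ V, f y = true) :
    IsOBisim (boolSSFs F) (patternModel U) (patternModel V) fun a b => a.isSome = b.isSome := by
  intro w₁ w₂ hw
  refine ⟨fun p => ?_, ?_, ?_⟩
  · match w₁, w₂ with
    | none, none => exact iff_of_true rfl rfl
    | some _, some _ => exact iff_of_false (Option.some_ne_none _) (Option.some_ne_none _)
  · rintro _ ⟨f, hf, rfl⟩ w₁' hw₁'
    exact exists_mem_ofBool_patternModel (hUV f hf).1 hw hw₁'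
  · rintro _ ⟨f, hf, rfl⟩ w₂' hw₂'
    obtain ⟨w₁', hw₁', hw'⟩ := exists_mem_ofBool_patternModel (hUV f hf).2 hw.symm hw₂'
    exact ⟨w₁', hw₁', hw'.symm⟩

lemma satisfies_box_var_patternModel_none {Os : Set (SSF n)} {g : (Fin n → Bool) → Bool}
    (hg : OfBool g ∈ Os) (p : ℕ) :
    Satisfies (patternModel U) none (.box ⟨OfBool g, hg⟩ (.var p)) ↔ ∀ y ∈ U, g y = false := by
  refine ⟨fun h y hy => ?_, fun h w hw => ?_⟩
  · by_contra hgy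
    exact Option.some_ne_none _
      (h (some ⟨y, hy⟩) (some_mem_ofBool_patternModel_none.2 (by simpa using hgy)))
  · cases w with
    | none => rfl
    | some y => exact absurd (some_mem_ofBool_patternModel_none.1 hw) (by simp [h y y.2])

end PatternModel

lemma exists_le_of_leExpr_boolSSFs {n : ℕ} {F G : Set ((Fin n → Bool) → Bool)}
    (hle : LeExpr (boolSSFs G) (boolSSFs F)) {g : (Fin n → Bool) → Bool} (hg : g ∈ G)
    {x₀ : Fin n → Bool} (hx₀ : g x₀ = true) :
    ∃ f ∈ F, f x₀ = true ∧ ∀ y, f y = true → g y = true := by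
  by_contra! h
  let U : Set (Fin n → Bool) := {y | g y = false}
  have hUV : ∀ f ∈ F, (∃ y ∈ U, f y = true) ↔ ∃ y ∈ insert x₀ U, f y = true := by
    refine fun f hf => ⟨fun ⟨y, hy, hfy⟩ => ⟨y, Set.mem_insert_of_mem _ hy, hfy⟩, ?_⟩
    rintro ⟨y, rfl | hy, hfy⟩
    · obtain ⟨z, hfz, hgz⟩ := h f hf hfy
      exact ⟨z, by simpa [U] using hgz, hfz⟩
    · exact ⟨y, hy, hfy⟩
  let φ : MLFormula (boolSSFs G) := .box ⟨OfBool g, g, hg, rfl⟩ (.var 0)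
  obtain ⟨ψ, hψ⟩ := hle φ
  have hU : Satisfies (patternModel U) none φ :=
    (satisfies_box_var_patternModel_none _ _).2 fun _ hy => hy
  have hV : ¬ Satisfies (patternModel (insert x₀ U)) none φ := fun hV => by
    simpa [hx₀] using (satisfies_box_var_patternModel_none _ _).1 hV x₀ (Set.mem_insert _ _)
  exact hV ((hψ _ _).2 (((isOBisim_patternModel hUV).satisfies_iff ψ rfl).1 ((hψ _ _).1 hU)))

/-- `ML⁺(𝒢) ≤_expr ML⁺(ℱ)` iff every `g ∈ 𝒢` is logically equivalent to a
disjunction of functions from a subset of `ℱ` (the empty disjunction being constant 0). -/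
theorem statement4 {n : ℕ} (F G : Set ((Fin n → Bool) → Bool)) :
    LeExpr (boolSSFs G) (boolSSFs F) ↔
      ∀ g ∈ G, ∃ S ⊆ F, ∀ x : Fin n → Bool, (g x = true ↔ ∃ f ∈ S, f x = true) := by
  refine ⟨fun hle g hg => ?_, leExpr_boolSSFs_of_forall_exists_disjunction⟩
  refine ⟨{f ∈ F | ∀ y, f y = true → g y = true}, fun f hf => hf.1, fun x => ⟨fun hx => ?_, ?_⟩⟩
  · obtain ⟨f, hf, hfx, hfg⟩ := exists_le_of_leExpr_boolSSFs hle hg hx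
    exact ⟨f, ⟨hf, hfg⟩, hfx⟩
  · rintro ⟨f, ⟨-, hfg⟩, hfx⟩
    exact hfg x hfx
end

section
/- Let I ⊆ ℕ and let ℓ ∈ ℕ with ℓ ∉ I. Then there is no formula φ ∈ ML_A(I) that is equivalent to [A_ℓ]p. -/
set_option autoImplicit false
attribute [local instance] Classical.propDecidable

/-!
Take two models whose worlds summarize words over `{1,2}` (length, last letter, parity of
the number of adjacent repeated letters), with `j`-edges appending `j`, differing only in
which parity makes `p` true at length `ℓ`. Every `A_ℓ`-successor of the empty word is
repeat-free, so `[A_ℓ]p` separates the two roots. Any `A_m` with `m ≠ ℓ` that reaches length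
`ℓ` starts from a nonempty word, and whether its first letter repeats the previous one is up
to the chosen word of `A_m`; so "same length, opposite parity at length `ℓ`" is an
`ML_A(I)`-bisimulation.
-/

theorem satisfies_iff_of_isOBisim {n : ℕ} {Os : Set (SSF n)} {M₁ M₂ : KripkeModel n}
    {Z : M₁.W → M₂.W → Prop} (hZ : IsOBisim Os M₁ M₂ Z) (φ : MLFormula Os) :
    ∀ {w₁ w₂}, Z w₁ w₂ → (Satisfies M₁ w₁ φ ↔ Satisfies M₂ w₂ φ) := by
  induction φ with
  | var p => exact fun h => (hZ _ _ h).1 p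
  | neg φ ih => exact fun h => not_congr (ih h)
  | or φ ψ ihφ ihψ => exact fun h => or_congr (ihφ h) (ihψ h)
  | box O φ ih =>
    intro w₁ w₂ h
    obtain ⟨-, forth, back⟩ := hZ _ _ h
    constructor
    · intro h₁ w₂' hw₂'
      obtain ⟨w₁', hw₁', hZ'⟩ := back O O.2 w₂' hw₂'
      exact (ih hZ').1 (h₁ w₁' hw₁')
    · intro h₂ w₁' hw₁'
      obtain ⟨w₂', hw₂', hZ'⟩ := forth O O.2 w₁' hw₁'
      exact (ih hZ').2 (h₂ w₂' hw₂')

theorem altWord_succ (c : Fin 2) (m : ℕ) :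
    altWord c (m + 1) = altWord c m ++ [altLetter c m] := by
  simp [altWord, List.range_succ]

theorem altLetter_succ_ne (c : Fin 2) (k : ℕ) : altLetter c (k + 1) ≠ altLetter c k := by
  unfold altLetter
  rcases Nat.mod_two_eq_zero_or_one k with h | h <;> fin_cases c <;>
    simp [h, Nat.succ_mod_two_eq_zero_iff]

structure WordSummary where
  length : ℕ
  last : Fin 2
  oddRepeats : Bool

namespace WordSummary

def empty : WordSummary := ⟨0, 0, false⟩

def snoc (x : WordSummary) (j : Fin 2) : WordSummary :=
  ⟨x.length + 1, j, xor x.oddRepeats (decide (x.length ≠ 0 ∧ j = x.last))⟩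

def snocs (x : WordSummary) (s : List (Fin 2)) : WordSummary := s.foldl snoc x

@[simp]
theorem snocs_append (x : WordSummary) (s t : List (Fin 2)) :
    x.snocs (s ++ t) = (x.snocs s).snocs t :=
  List.foldl_append

theorem snocs_altWord_succ (x : WordSummary) (c : Fin 2) (m : ℕ) :
    x.snocs (altWord c (m + 1)) =
      ⟨x.length + (m + 1), altLetter c m,
        xor x.oddRepeats (decide (x.length ≠ 0 ∧ c = x.last))⟩ := by
  induction m with
  | zero => simp [snocs, altWord, snoc, altLetter]
  | succ m ih =>
    rw [altWord_succ, snocs_append, ih]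
    simp [snocs, snoc, altLetter_succ_ne]
    omega

theorem empty_snocs_altWord (c : Fin 2) (m : ℕ) :
    (empty.snocs (altWord c m)).length = m ∧ (empty.snocs (altWord c m)).oddRepeats = false := by
  cases m with
  | zero => exact ⟨rfl, rfl⟩
  | succ m => simp [snocs_altWord_succ, empty]

def parityModel (ℓ : ℕ) (b : Bool) : KripkeModel 2 where
  W := WordSummary
  nonempty := ⟨empty⟩
  R j x y := y = x.snoc j
  val _ := {x | x.length = ℓ → x.oddRepeats = b}

theorem sSucc_parityModel_iff {ℓ : ℕ} {b : Bool} (s : List (Fin 2)) (x y : WordSummary) :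
    sSucc (parityModel ℓ b) s x y ↔ y = x.snocs s := by
  induction s generalizing x with
  | nil => exact Iff.rfl
  | cons j s ih => exact exists_eq_left.trans (ih _)

theorem mem_ofLang_altLang_parityModel_iff {ℓ m : ℕ} {b : Bool} (x y : WordSummary) :
    y ∈ OfLang (altLang m) (parityModel ℓ b) x ↔ ∃ c : Fin 2, y = x.snocs (altWord c m) := by
  change (∃ s ∈ altLang m, sSucc (parityModel ℓ b) s x y) ↔ _
  simp only [altLang, Set.mem_insert_iff, Set.mem_singleton_iff,
    exists_eq_or_imp, exists_eq_left, sSucc_parityModel_iff, Fin.exists_fin_two]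

def OppositeAt (ℓ : ℕ) (x y : WordSummary) : Prop :=
  x.length = y.length ∧ (x.length = ℓ → x.oddRepeats ≠ y.oddRepeats)

theorem OppositeAt.symm {ℓ : ℕ} {x y : WordSummary} (h : OppositeAt ℓ x y) : OppositeAt ℓ y x :=
  ⟨h.1.symm, fun hy => (h.2 (h.1.trans hy)).symm⟩

theorem OppositeAt.exists_snocs_altWord {ℓ m : ℕ} {x y : WordSummary} (h : OppositeAt ℓ x y)
    (hm : m ≠ ℓ) (c : Fin 2) :
    ∃ c' : Fin 2, OppositeAt ℓ (x.snocs (altWord c m)) (y.snocs (altWord c' m)) := by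
  obtain _ | m := m
  · exact ⟨c, h⟩
  by_cases hℓ : x.length + (m + 1) = ℓ
  · have hx : x.length ≠ 0 := by omega
    -- repeating the last letter of `y` flips its parity, any other letter keeps it
    refine ⟨if (x.snocs (altWord c (m + 1))).oddRepeats = y.oddRepeats then y.last
      else y.last + 1, ?_⟩
    simp only [OppositeAt, snocs_altWord_succ, h.1] at hx ⊢
    refine ⟨trivial, fun _ => ?_⟩
    split_ifs with hp <;> simpa [hx] using hp
  · refine ⟨c, ?_⟩
    simp only [OppositeAt, snocs_altWord_succ, h.1] at hℓ ⊢
    exact ⟨trivial, fun h' => absurd h' hℓ⟩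

end WordSummary

open WordSummary in
theorem isOBisim_parityModel_oppositeAt {I : Set ℕ} {ℓ : ℕ} (hℓ : ℓ ∉ I) :
    IsOBisim (MLA_ops I) (parityModel ℓ false) (parityModel ℓ true) (OppositeAt ℓ) := by
  intro x y h
  refine ⟨fun _ => ?_, ?_, ?_⟩
  · change (x.length = ℓ → _) ↔ (y.length = ℓ → _)
    rw [← h.1]
    refine imp_congr_right fun hx => ?_
    have := h.2 hx
    revert this
    cases x.oddRepeats <;> cases y.oddRepeats <;> decide
  · rintro _ ⟨m, hm, rfl⟩ x' hx'
    obtain ⟨c, rfl⟩ := (mem_ofLang_altLang_parityModel_iff x x').1 hx'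
    obtain ⟨c', h'⟩ := h.exists_snocs_altWord (ne_of_mem_of_not_mem hm hℓ) c
    exact ⟨_, (mem_ofLang_altLang_parityModel_iff y _).2 ⟨c', rfl⟩, h'⟩
  · rintro _ ⟨m, hm, rfl⟩ y' hy'
    obtain ⟨c, rfl⟩ := (mem_ofLang_altLang_parityModel_iff y y').1 hy'
    obtain ⟨c', h'⟩ := h.symm.exists_snocs_altWord (ne_of_mem_of_not_mem hm hℓ) c
    exact ⟨_, (mem_ofLang_altLang_parityModel_iff x _).2 ⟨c', rfl⟩, h'.symm⟩

open WordSummary in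
theorem statement7_general (I : Set ℕ) (ℓ : ℕ) (hℓ : 1 ≤ ℓ)
    (hnot : ℓ ∉ I) :
    ¬ ∃ φ : MLFormula (MLA_ops I), FEquiv φ (boxAltIter ℓ 1) := by
  rintro ⟨φ, hφ⟩
  have h_false : Satisfies (parityModel ℓ false) empty (boxAltIter ℓ 1) := by
    intro x hx _
    obtain ⟨c, rfl⟩ := (mem_ofLang_altLang_parityModel_iff _ x).1 hx
    exact (empty_snocs_altWord c ℓ).2
  have h_true : ¬ Satisfies (parityModel ℓ true) empty (boxAltIter ℓ 1) := by
    intro h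
    have h₀ := empty_snocs_altWord 0 ℓ
    have := h _ ((mem_ofLang_altLang_parityModel_iff _ _).2 ⟨0, rfl⟩) h₀.1
    simp [h₀.2] at this
  have h_root : OppositeAt ℓ empty empty := ⟨rfl, fun h => absurd h.symm (Nat.pos_iff_ne_zero.1 hℓ)⟩
  have h_bisim := satisfies_iff_of_isOBisim (isOBisim_parityModel_oppositeAt hnot) φ h_root
  exact h_true ((hφ _ _).1 (h_bisim.1 ((hφ _ _).2 h_false)))

/-- if `ℓ ∉ I`, then no `ML_A(I)`-formula is equivalent to `[A_ℓ]p`. -/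
theorem statement7 (I : Set ℕ) (hI : ∀ m ∈ I, 1 ≤ m) (ℓ : ℕ) (hℓ : 1 ≤ ℓ)
    (hnot : ℓ ∉ I) :
    ¬ ∃ φ : MLFormula (MLA_ops I), FEquiv φ (boxAltIter ℓ 1) :=
  statement7_general I ℓ hℓ hnot
end
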